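/- Let n ≥ 1, 0 < a ≤ n and b > 0. If either a < n, or (a = n and 0 < b ≤ 1), then ∫_{ℝⁿ} (1+4π²|x|²)^{−a/2} (1+ln(1+4π²|x|²))^{−b} dx = ∞. In particular, for 0 < p < ∞ and 0 < γ < ∞ with either t·min(1,p) < n, or t·min(1,p) = n and min(1,p)·γ/2 ≤ 1, one has ‖H^{(t,γ)}‖_{L^{min(1,p)}(ℝⁿ)} = ∞, where H^{(t,γ)}(x) = (1+4π²|x|²)^{−t/2} (1+ln(1+4π²|x|²))^{−γ/2}. -/

import Mathlib

open MeasureTheory Real SchwartzMap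
open scoped FourierTransform ENNReal NNReal

noncomputable section

abbrev Eucl (n : ℕ) := EuclideanSpace ℝ (Fin n)

/-- Decreasing rearrangement (with respect to the measure `μ`) of a function whose pointwise
"absolute value" is `F : α → ℝ≥0∞`, with the convention `sInf ∅ = ∞`. -/
def rearr {α : Type*} [MeasurableSpace α] (μ : Measure α)
    (F : α → ℝ≥0∞) (t : ℝ) : ℝ≥0∞ :=
  sInf {s : ℝ≥0∞ | μ {x | s < F x} ≤ ENNReal.ofReal t}

/-- The Lorentz quasi-norm `‖·‖_{L^{p,q}}`:
`(∫_0^∞ (t^{1/p} f^*(t))^q dt/t)^{1/q}` for `q < ∞`, and `sup_{t>0} t^{1/p} f^*(t)` for `q = ∞`. -/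
def lorentzNorm {α : Type*} [MeasurableSpace α] (μ : Measure α)
    (F : α → ℝ≥0∞) (p : ℝ) (q : ℝ≥0∞) : ℝ≥0∞ :=
  if q = ∞ then ⨆ t ∈ Set.Ioi (0:ℝ), ENNReal.ofReal (t ^ (1/p)) * rearr μ F t
  else (∫⁻ t in Set.Ioi (0:ℝ),
      (ENNReal.ofReal (t ^ (1/p)) * rearr μ F t) ^ q.toReal * (ENNReal.ofReal t)⁻¹) ^ (1/q.toReal)

/-- Lorentz quasi-norm of a complex-valued function on `ℝⁿ` (Lebesgue measure). -/
def lorentzNormC {n : ℕ} (f : Eucl n → ℂ) (p : ℝ) (q : ℝ≥0∞) : ℝ≥0∞ :=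
  lorentzNorm (volume : Measure (Eucl n)) (fun x => (‖f x‖₊ : ℝ≥0∞)) p q

/-- The operator `(I - Δ)^{s/2}`, i.e. `f ↦ ((1+4π²|·|²)^{s/2} f̂)^∨`. -/
def besselOp {n : ℕ} (s : ℝ) (f : Eucl n → ℂ) : Eucl n → ℂ :=
  𝓕⁻ (fun ξ : Eucl n => (((1 + 4*π^2*‖ξ‖^2) ^ (s/2) : ℝ) : ℂ) * 𝓕 f ξ)

/-- The Lorentz–Sobolev quasi-norm `‖f‖_{L_s^{p,q}} = ‖(I-Δ)^{s/2} f‖_{L^{p,q}}`. -/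
def lorentzSobolevNorm {n : ℕ} (f : Eucl n → ℂ) (s p : ℝ) (q : ℝ≥0∞) : ℝ≥0∞ :=
  lorentzNormC (besselOp s f) p q

/-- The Fourier multiplier operator `T_σ f = (σ f̂)^∨`. -/
def multiplierOp {n : ℕ} (σ f : Eucl n → ℂ) : Eucl n → ℂ :=
  𝓕⁻ (fun ξ => σ ξ * 𝓕 f ξ)

/-- Convolution of two complex-valued functions on `ℝⁿ`. -/
def conv {n : ℕ} (f g : Eucl n → ℂ) (x : Eucl n) : ℂ :=
  ∫ y, f y * g (x - y)

/-- The Hardy space quasi-norm `‖f‖_{H^p} = ‖ sup_{k ∈ ℤ} |Φ_k ∗ f| ‖_{L^p}`,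
where `Φ_k = 2^{kn} Φ(2^k ·)`. -/
def hardyNorm {n : ℕ} (p : ℝ) (Φ f : Eucl n → ℂ) : ℝ≥0∞ :=
  (∫⁻ x, (⨆ k : ℤ,
      (‖conv (fun y => ((2:ℝ) ^ (k * (n:ℤ)) : ℝ) • Φ ((2:ℝ) ^ k • y)) f x‖₊ : ℝ≥0∞)) ^ p) ^ (1/p)

/-- `τ^{(s,p)} = n/(s - (n/min(1,p) - n))`. -/
def tau (n : ℕ) (s p : ℝ) : ℝ := (n:ℝ) / (s - ((n:ℝ) / min 1 p - (n:ℝ)))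

/-- `sup_{j ∈ ℤ} ‖σ(2^j ·) Ψ̂‖_{L_s^{r,q}}`. -/
def multiplierNorm {n : ℕ} (σ : Eucl n → ℂ) (Ψ : Eucl n → ℂ) (s r : ℝ) (q : ℝ≥0∞) : ℝ≥0∞ :=
  ⨆ j : ℤ, lorentzSobolevNorm (fun ξ => σ ((2:ℝ) ^ j • ξ) * 𝓕 Ψ ξ) s r q

/-- `H^{(s,γ)}(x) = (1+4π²|x|²)^{-s/2} (1+ln(1+4π²|x|²))^{-γ/2}`. -/
def Hfun (n : ℕ) (s γ : ℝ) (x : Eucl n) : ℝ :=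
  (1 + 4*π^2*‖x‖^2) ^ (-s/2) * (1 + Real.log (1 + 4*π^2*‖x‖^2)) ^ (-γ/2)

/-- `𝔗^{(s,γ)}(ξ) = |ξ|^{-(n-s)} (1+2 ln |ξ|⁻¹)^{-γ/2}` if `s < n`, and `1` if `s ≥ n`. -/
def Tfun (n : ℕ) (s γ : ℝ) (ξ : Eucl n) : ℝ :=
  if s < (n:ℝ) then ‖ξ‖ ^ (-((n:ℝ) - s)) * (1 + 2*Real.log ‖ξ‖⁻¹) ^ (-γ/2) else 1

/-- `K^{(t,γ)}(x) = (H^{(t,γ)} ∗ η̃)(x) e^{2πi⟨x,e₁⟩}`. -/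
def Kfun (n : ℕ) (hn : 0 < n) (t γ : ℝ) (ηt : Eucl n → ℂ) (x : Eucl n) : ℂ :=
  (∫ y, (Hfun n t γ y : ℂ) * ηt (x - y)) *
    Complex.exp (2 * (π:ℂ) * Complex.I *
      ((inner ℝ x (EuclideanSpace.single (⟨0, hn⟩ : Fin n) (1:ℝ)) : ℝ) : ℂ))

end

/-!
On the dyadic annulus `2ᵏ ≤ ‖x‖ < 2ᵏ⁺¹`, whose volume is at least `2ᵏⁿ` times that of the unit
ball, the integrand is at least a constant times `2^(-ka) (k+1)^(-b)`. The integral therefore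
dominates `∑ₖ 2^(k(n-a)) (k+1)^(-b)`, whose terms tend to `∞` when `a < n` and which is a
divergent `p`-series when `a = n`, `b ≤ 1`. Since `(H^{(t,γ)})^q` is again of this form, with
`a = tq` and `b = γq/2`, its integral is infinite as well.
-/

open Filter Topology Metric Set Module Function

lemma ENNReal.tsum_ofReal_eq_top_of_not_summable {f : ℕ → ℝ} (hf : ∀ k, 0 ≤ f k)
    (h : ¬Summable f) : ∑' k, ENNReal.ofReal (f k) = ∞ := by
  by_contra hne
  exact h <| (ENNReal.summable_toReal hne).congr fun k => ENNReal.toReal_ofReal (hf k)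

lemma not_summable_two_rpow_mul_rpow {ε b : ℝ} (h : 0 < ε ∨ (ε = 0 ∧ b ≤ 1)) :
    ¬Summable fun k : ℕ => (2 : ℝ) ^ ((k : ℝ) * ε) * ((k : ℝ) + 1) ^ (-b) := by
  rcases h with hε | ⟨rfl, hb⟩
  · intro hs
    have hk : Tendsto (fun k : ℕ => (k : ℝ) + 1) atTop atTop :=
      tendsto_atTop_add_const_right _ 1 tendsto_natCast_atTop_atTop
    have hgrow : Tendsto (fun k : ℕ => (2 : ℝ) ^ ((k : ℝ) * ε) * ((k : ℝ) + 1) ^ (-b))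
        atTop atTop := by
      refine (((tendsto_exp_mul_div_rpow_atTop b (ε * log 2) (by positivity)).comp hk)
        |>.const_mul_atTop (by positivity : (0 : ℝ) < 2 ^ (-ε))).congr fun k => ?_
      simp only [comp_apply, div_eq_mul_inv, ← rpow_neg (by positivity : (0 : ℝ) ≤ k + 1)]
      rw [rpow_def_of_pos two_pos, rpow_def_of_pos two_pos, ← mul_assoc, ← exp_add]
      ring_nf
    exact not_tendsto_nhds_of_tendsto_atTop hgrow 0 hs.tendsto_atTop_zero
  · have hp : ¬Summable fun k : ℕ => (k : ℝ) ^ (-b) := by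
      rw [summable_nat_rpow]; linarith
    rw [← summable_nat_add_iff 1] at hp
    simpa using hp

noncomputable def logWeight (a b s : ℝ) : ℝ := s ^ (-a / 2) * (1 + log s) ^ (-b)

lemma logWeight_pos {a b s : ℝ} (hs : 1 ≤ s) : 0 < logWeight a b s := by
  have := log_nonneg hs
  unfold logWeight
  positivity

lemma logWeight_antitoneOn {a b : ℝ} (ha : 0 ≤ a) (hb : 0 ≤ b) :
    AntitoneOn (logWeight a b) (Ici 1) := by
  intro s (hs : 1 ≤ s) t (ht : 1 ≤ t) hst
  have := log_nonneg hs
  have := log_nonneg ht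
  exact mul_le_mul (rpow_le_rpow_of_nonpos (by linarith) hst (by linarith))
    (rpow_le_rpow_of_nonpos (by linarith) (by gcongr) (by linarith))
    (by positivity) (by positivity)

lemma logWeight_rpow {a b s q : ℝ} (hs : 1 ≤ s) :
    logWeight a b s ^ q = logWeight (a * q) (b * q) s := by
  have := log_nonneg hs
  unfold logWeight
  rw [mul_rpow (by positivity) (by positivity), ← rpow_mul (by positivity),
    ← rpow_mul (by positivity)]
  ring_nf

lemma logWeight_mul_four_pow_ge {a b C : ℝ} (hb : 0 ≤ b) (hC : 4 ≤ C) (k : ℕ) :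
    logWeight a b C * 2 ^ (-(k * a)) * (k + 1) ^ (-b) ≤ logWeight a b (C * 4 ^ k) := by
  have hC0 : 0 < C := by linarith
  have hlog4 : 0 ≤ log 4 := log_nonneg (by norm_num)
  have hlog4C : log 4 ≤ log C := log_le_log (by norm_num) hC
  have hlogCk : log (C * 4 ^ k) = log C + k * log 4 := by
    rw [log_mul hC0.ne' (by positivity), log_pow]
  have hpow : ((4 : ℝ) ^ k) ^ (-a / 2) = (2 : ℝ) ^ (-(k * a)) := by
    rw [show (4 : ℝ) ^ k = 2 ^ (2 * (k : ℝ)) by norm_num [rpow_mul, pow_mul],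
      ← rpow_mul (by norm_num)]
    ring_nf
  have hlog : 1 + log (C * 4 ^ k) ≤ (1 + log C) * (k + 1) := by
    rw [hlogCk]
    nlinarith [k.cast_nonneg (α := ℝ)]
  unfold logWeight
  rw [mul_rpow hC0.le (by positivity), hpow, mul_right_comm _ _ (2 ^ _), mul_assoc,
    ← mul_rpow (by linarith) (by positivity)]
  refine mul_le_mul_of_nonneg_left (rpow_le_rpow_of_nonpos ?_ hlog (by linarith))
    (mul_nonneg (rpow_nonneg hC0.le _) (rpow_nonneg zero_le_two _))
  rw [hlogCk]
  nlinarith [k.cast_nonneg (α := ℝ)]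

lemma logWeight_one_add_mul_sq_ge {a b c r : ℝ} (ha : 0 ≤ a) (hb : 0 ≤ b) (hc : 0 ≤ c)
    (hr0 : 0 ≤ r) {k : ℕ} (hr : r < 2 ^ (k + 1)) :
    logWeight a b (4 * (1 + c)) * 2 ^ (-(k * a)) * (k + 1) ^ (-b) ≤
      logWeight a b (1 + c * r ^ 2) := by
  have h4k : (1 : ℝ) ≤ 4 ^ k := one_le_pow₀ (by norm_num)
  have hr2 : r ^ 2 ≤ 4 * 4 ^ k := by
    calc r ^ 2 ≤ (2 ^ (k + 1)) ^ 2 := by gcongr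
      _ = 4 * 4 ^ k := by rw [← pow_mul, mul_comm, pow_mul, pow_succ]; norm_num [mul_comm]
  refine (logWeight_mul_four_pow_ge hb (by linarith) k).trans
    (logWeight_antitoneOn ha hb ?_ ?_ ?_)
  · exact mem_Ici.2 (le_add_of_nonneg_right (by positivity))
  · simp only [mem_Ici]
    nlinarith
  · nlinarith

section DyadicAnnuli

variable {E : Type*} [NormedAddCommGroup E] [NormedSpace ℝ E] [MeasurableSpace E] [BorelSpace E]
  [FiniteDimensional ℝ E] [Nontrivial E] (μ : Measure E) [μ.IsAddHaarMeasure]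

lemma addHaar_ball_two_mul_diff_ball_ge {r : ℝ} (hr : 0 ≤ r) :
    ENNReal.ofReal (r ^ finrank ℝ E) * μ (ball 0 1) ≤ μ (ball 0 (2 * r) \ ball 0 r) := by
  have hd : 1 ≤ finrank ℝ E := finrank_pos
  rw [measure_sdiff (ball_subset_ball (by linarith)) measurableSet_ball.nullMeasurableSet
    measure_ball_lt_top.ne, Measure.addHaar_ball μ (0 : E) (r := 2 * r) (by positivity),
    Measure.addHaar_ball μ (0 : E) hr]
  refine ENNReal.le_sub_of_add_le_right (by finiteness) ?_
  rw [← add_mul, ← ENNReal.ofReal_add (by positivity) (by positivity)]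
  gcongr
  have : (2 : ℝ) ≤ 2 ^ finrank ℝ E := le_self_pow₀ one_le_two (by omega)
  rw [mul_pow]
  nlinarith [pow_nonneg hr (finrank ℝ E)]

lemma tsum_le_lintegral_of_le_on_dyadic_annuli {f : E → ℝ≥0∞} {c : ℕ → ℝ≥0∞}
    (hc : ∀ k x, 2 ^ k ≤ ‖x‖ → ‖x‖ < 2 ^ (k + 1) → c k ≤ f x) :
    μ (ball 0 1) * ∑' k, ENNReal.ofReal (2 ^ (k * finrank ℝ E)) * c k ≤ ∫⁻ x, f x ∂μ := by
  set A : ℕ → Set E := fun k => (‖·‖) ⁻¹' Ico (2 ^ k) (2 ^ (k + 1))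
  have hAm : ∀ k, MeasurableSet (A k) := fun k => measurableSet_Ico.preimage measurable_norm
  have hA : ∀ k, A k = ball 0 (2 * 2 ^ k) \ ball 0 (2 ^ k) := fun k => by
    ext x
    simp [A, pow_succ, mul_comm, and_comm]
  have hdisj : Pairwise (Disjoint on A) := fun i j hij =>
    ((pow_right_mono₀ one_le_two).pairwise_disjoint_on_Ico_succ hij).preimage _
  calc μ (ball 0 1) * ∑' k, ENNReal.ofReal (2 ^ (k * finrank ℝ E)) * c k
      ≤ ∑' k, ∫⁻ _ in A k, c k ∂μ := by
        rw [← ENNReal.tsum_mul_left]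
        refine ENNReal.tsum_le_tsum fun k => ?_
        rw [setLIntegral_const, hA, pow_mul, mul_comm, mul_comm (ENNReal.ofReal _), mul_assoc]
        gcongr
        exact addHaar_ball_two_mul_diff_ball_ge μ (by positivity)
    _ ≤ ∑' k, ∫⁻ x in A k, f x ∂μ :=
        ENNReal.tsum_le_tsum fun k => setLIntegral_mono' (hAm k) fun x hx => hc k x hx.1 hx.2
    _ = ∫⁻ x in ⋃ k, A k, f x ∂μ := (lintegral_iUnion hAm hdisj f).symm
    _ ≤ ∫⁻ x, f x ∂μ := setLIntegral_le_lintegral _ _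

lemma lintegral_logWeight_one_add_mul_norm_sq_eq_top {a b c : ℝ} (ha : 0 ≤ a) (hb : 0 ≤ b)
    (hc : 0 ≤ c) (hab : a < finrank ℝ E ∨ (a = finrank ℝ E ∧ b ≤ 1)) :
    ∫⁻ x, ENNReal.ofReal (logWeight a b (1 + c * ‖x‖ ^ 2)) ∂μ = ∞ := by
  set L := logWeight a b (4 * (1 + c))
  have hL : 0 < L := logWeight_pos (by linarith)
  have hterm : ∀ k : ℕ, ENNReal.ofReal (2 ^ (k * finrank ℝ E)) *
      ENNReal.ofReal (L * 2 ^ (-(k * a)) * (k + 1) ^ (-b)) =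
      ENNReal.ofReal L * ENNReal.ofReal (2 ^ (k * (finrank ℝ E - a)) * (k + 1) ^ (-b)) := by
    intro k
    rw [← ENNReal.ofReal_mul (by positivity), ← ENNReal.ofReal_mul hL.le, ← rpow_natCast,
      mul_sub, rpow_sub two_pos, rpow_neg zero_le_two]
    push_cast
    ring_nf
  have hseries : ∑' k : ℕ, ENNReal.ofReal (2 ^ (k * finrank ℝ E)) *
      ENNReal.ofReal (L * 2 ^ (-(k * a)) * (k + 1) ^ (-b)) = ∞ := by
    rw [tsum_congr hterm, ENNReal.tsum_mul_left,
      ENNReal.tsum_ofReal_eq_top_of_not_summable (fun k => by positivity)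
        (not_summable_two_rpow_mul_rpow (hab.imp sub_pos.2 fun h => ⟨by rw [h.1, sub_self], h.2⟩)),
      ENNReal.mul_top (by simpa using hL)]
  refine top_le_iff.1 ?_
  calc ∞ = μ (ball 0 1) * ∞ := (ENNReal.mul_top (measure_ball_pos μ 0 one_pos).ne').symm
    _ ≤ _ := hseries ▸ tsum_le_lintegral_of_le_on_dyadic_annuli μ fun k x _ hx =>
        ENNReal.ofReal_le_ofReal (logWeight_one_add_mul_sq_ge ha hb hc (norm_nonneg x) hx)

end DyadicAnnuli

lemma Hfun_eq_logWeight (n : ℕ) (t γ : ℝ) (x : Eucl n) :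
    Hfun n t γ x = logWeight t (γ / 2) (1 + 4 * π ^ 2 * ‖x‖ ^ 2) := by
  simp only [Hfun, logWeight, neg_div]

lemma eLpNorm_Hfun_eq_top {n : ℕ} [Nonempty (Fin n)] {q t γ : ℝ} (hq : 0 < q) (ht : 0 ≤ t)
    (hγ : 0 ≤ γ) (htγ : t * q < n ∨ (t * q = n ∧ q * γ / 2 ≤ 1)) :
    eLpNorm (Hfun n t γ) (ENNReal.ofReal q) volume = ∞ := by
  have hs : ∀ x : Eucl n, 1 ≤ 1 + 4 * π ^ 2 * ‖x‖ ^ 2 := fun x =>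
    le_add_of_nonneg_right (by positivity)
  have hpow : ∀ x : Eucl n, ‖Hfun n t γ x‖ₑ ^ q =
      ENNReal.ofReal (logWeight (t * q) (γ / 2 * q) (1 + 4 * π ^ 2 * ‖x‖ ^ 2)) := fun x => by
    rw [Hfun_eq_logWeight, Real.enorm_eq_ofReal (logWeight_pos (hs x)).le,
      ENNReal.ofReal_rpow_of_nonneg (logWeight_pos (hs x)).le hq.le, logWeight_rpow (hs x)]
  have hexp : t * q < finrank ℝ (Eucl n) ∨ (t * q = finrank ℝ (Eucl n) ∧ γ / 2 * q ≤ 1) := by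
    rw [finrank_euclideanSpace_fin]
    exact htγ.imp_right fun h => ⟨h.1, by linarith [h.2]⟩
  rw [eLpNorm_eq_lintegral_rpow_enorm_toReal (by simpa using hq) ENNReal.ofReal_ne_top,
    ENNReal.toReal_ofReal hq.le, lintegral_congr hpow,
    lintegral_logWeight_one_add_mul_norm_sq_eq_top volume (by positivity) (by positivity)
      (by positivity) hexp, ENNReal.top_rpow_of_pos (by positivity)]

theorem Hfun_infinite_norm_general
    (n : ℕ) (hn : 1 ≤ n) (a b : ℝ) (ha0 : 0 < a) (hb : 0 < b)
    (hcase : a < (n:ℝ) ∨ (a = (n:ℝ) ∧ b ≤ 1)) :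
    (∫⁻ x : Eucl n, ENNReal.ofReal
        ((1 + 4*π^2*‖x‖^2) ^ (-a/2) * (1 + Real.log (1 + 4*π^2*‖x‖^2)) ^ (-b))) = ∞ ∧
    ∀ p t γ : ℝ, 0 < p → 0 < t → 0 < γ →
      (t * min 1 p < (n:ℝ) ∨ (t * min 1 p = (n:ℝ) ∧ min 1 p * γ / 2 ≤ 1)) →
      eLpNorm (Hfun n t γ) (ENNReal.ofReal (min 1 p)) volume = ∞ := by
  have : Nonempty (Fin n) := ⟨⟨0, hn⟩⟩
  refine ⟨?_, fun p t γ hp ht hγ htγ =>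
    eLpNorm_Hfun_eq_top (lt_min one_pos hp) ht.le hγ.le htγ⟩
  exact lintegral_logWeight_one_add_mul_norm_sq_eq_top volume ha0.le hb.le (by positivity)
    (by rwa [finrank_euclideanSpace_fin])

/-- If `0 < a ≤ n`, `b > 0` and either `a < n`, or `a = n` and `b ≤ 1`, then
`∫ (1+4π²|x|²)^{-a/2}(1+ln(1+4π²|x|²))^{-b} dx = ∞`; in particular
`‖H^{(t,γ)}‖_{L^{min(1,p)}} = ∞` when `t·min(1,p) < n`, or `t·min(1,p) = n` and
`min(1,p)·γ/2 ≤ 1`. -/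
theorem Hfun_infinite_norm
    (n : ℕ) (hn : 1 ≤ n) (a b : ℝ) (ha0 : 0 < a) (han : a ≤ (n:ℝ)) (hb : 0 < b)
    (hcase : a < (n:ℝ) ∨ (a = (n:ℝ) ∧ b ≤ 1)) :
    (∫⁻ x : Eucl n, ENNReal.ofReal
        ((1 + 4*π^2*‖x‖^2) ^ (-a/2) * (1 + Real.log (1 + 4*π^2*‖x‖^2)) ^ (-b))) = ∞ ∧
    ∀ p t γ : ℝ, 0 < p → 0 < t → 0 < γ →
      (t * min 1 p < (n:ℝ) ∨ (t * min 1 p = (n:ℝ) ∧ min 1 p * γ / 2 ≤ 1)) →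
      eLpNorm (Hfun n t γ) (ENNReal.ofReal (min 1 p)) volume = ∞ :=
  Hfun_infinite_norm_general n hn a b ha0 hb hcase
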